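/- arXiv:2005.13597 — 2 statements merged into one kernel-verified Lean document; each statement's English description precedes it below -/
import Mathlib

section
/- The van der Corput sequence (e^{iθ_n}) is equidistributed on the unit circle: for every arc A ⊆ S¹, the fraction of points e^{iθ_n} with n < N lying in A converges to ℓ(A)/(2π) as N → ∞. -/
/-!
Prepending the top bit to `m < 2 ^ k` only adds `2⁻¹ ^ (k + 1)`:
`r (2 ^ k + m) = 2⁻¹ ^ (k + 1) + r m`. By induction the first `2 ^ k` values of `r` are
therefore a permutation of the grid `j / 2 ^ k`, so among them exactly `⌈2 ^ k β⌉₊` lie below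
`β ≤ 1`. Splitting `N < 2 ^ (k + 1)` at its top binary digit, the number of `n < N` with
`r n < β` differs from `N β` by at most `2 (k + 1)`, i.e. by `O(log N)`; dividing by `N` gives
equidistribution, and `θ n ∈ [a, b)` iff `r n ∈ [a / 2π, b / 2π)`.
-/

/-- Binary radical inverse of n: if n = ∑ a_j 2^j then r n = ∑ a_j 2^{-j-1} ∈ [0,1). -/
noncomputable def radicalInverse (n : ℕ) : ℝ :=
  ∑ i ∈ Finset.range (n + 1), if n.testBit i then ((2:ℝ) ^ (i + 1))⁻¹ else 0

/-- The van der Corput angle θ_n = 2π r(n) ∈ [0, 2π). -/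
noncomputable def theta (n : ℕ) : ℝ := 2 * Real.pi * radicalInverse n

open Finset Filter Topology

lemma radicalInverse_eq_sum_range {n K : ℕ} (hn : n < 2 ^ K) :
    radicalInverse n = ∑ i ∈ range K, if n.testBit i then ((2:ℝ) ^ (i + 1))⁻¹ else 0 := by
  have extend : ∀ A B : ℕ, A ≤ B → n < 2 ^ A →
      (∑ i ∈ range A, if n.testBit i then ((2:ℝ) ^ (i + 1))⁻¹ else 0) =
        ∑ i ∈ range B, if n.testBit i then ((2:ℝ) ^ (i + 1))⁻¹ else 0 := by
    intro A B hAB hA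
    refine sum_subset (range_subset_range.2 hAB) fun i _ hi => ?_
    have : n < 2 ^ i := hA.trans_le (Nat.pow_le_pow_right two_pos (by simpa using hi))
    simp [Nat.testBit_eq_false_of_lt this]
  have hn' : n < 2 ^ (n + 1) := n.lt_two_pow_self.trans (Nat.pow_lt_pow_succ one_lt_two)
  rcases le_total K (n + 1) with hK | hK
  · exact (extend K (n + 1) hK hn).symm
  · exact extend (n + 1) K hK hn'

lemma radicalInverse_two_pow_add {k m : ℕ} (hm : m < 2 ^ k) :
    radicalInverse (2 ^ k + m) = ((2:ℝ) ^ (k + 1))⁻¹ + radicalInverse m := by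
  have hlt : 2 ^ k + m < 2 ^ (k + 1) := by rw [pow_succ]; omega
  rw [radicalInverse_eq_sum_range hlt, radicalInverse_eq_sum_range hm, sum_range_succ,
    Nat.testBit_two_pow_add_eq, Nat.testBit_eq_false_of_lt hm, add_comm]
  congr 1
  refine sum_congr rfl fun i hi => ?_
  rw [Nat.testBit_two_pow_add_gt (mem_range.1 hi)]

lemma sum_range_two_mul {M : Type*} [AddCommMonoid M] (g : ℕ → M) (n : ℕ) :
    ∑ i ∈ range (2 * n), g i = ∑ j ∈ range n, (g (2 * j) + g (2 * j + 1)) := by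
  induction n with
  | zero => simp
  | succ n ih => rw [Nat.mul_succ, sum_range_succ, sum_range_succ, sum_range_succ, ih, add_assoc]

theorem sum_range_two_pow_radicalInverse {M : Type*} [AddCommMonoid M] (k : ℕ) (f : ℝ → M) :
    ∑ n ∈ range (2 ^ k), f (radicalInverse n) = ∑ j ∈ range (2 ^ k), f (j / 2 ^ k) := by
  induction k generalizing f with
  | zero => simp [radicalInverse]
  | succ k ih =>
    set h : ℝ := ((2:ℝ) ^ (k + 1))⁻¹
    calc ∑ n ∈ range (2 ^ (k + 1)), f (radicalInverse n)
        = ∑ n ∈ range (2 ^ k), f (radicalInverse n)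
            + ∑ m ∈ range (2 ^ k), f (h + radicalInverse m) := by
          rw [pow_succ, mul_two, sum_range_add]
          congr 1
          exact sum_congr rfl fun m hm => by rw [radicalInverse_two_pow_add (mem_range.1 hm)]
      _ = ∑ j ∈ range (2 ^ k), (f (j / 2 ^ k) + f (h + j / 2 ^ k)) := by
          rw [ih, ih (fun x => f (h + x)), sum_add_distrib]
      _ = ∑ i ∈ range (2 ^ (k + 1)), f (i / 2 ^ (k + 1)) := by
          rw [pow_succ', sum_range_two_mul]
          refine sum_congr rfl fun j _ => ?_
          congr 2
          · push_cast; field_simp; ring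
          · simp only [h]; push_cast; field_simp; ring

noncomputable def radicalInverseCount (N : ℕ) (β : ℝ) : ℕ :=
  #{n ∈ range N | radicalInverse n < β}

lemma card_filter_range_natCast_lt {M : ℕ} {y : ℝ} (hy : y ≤ M) :
    #{j ∈ range M | ((j : ℕ) : ℝ) < y} = ⌈y⌉₊ := by
  suffices {j ∈ range M | ((j : ℕ) : ℝ) < y} = range ⌈y⌉₊ by rw [this, card_range]
  ext j
  simp only [mem_filter, mem_range, Nat.lt_ceil, and_iff_right_iff_imp]
  intro hj
  exact_mod_cast hj.trans_le hy

lemma radicalInverseCount_two_pow {k : ℕ} {β : ℝ} (hβ : β ≤ 1) :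
    radicalInverseCount (2 ^ k) β = ⌈2 ^ k * β⌉₊ := by
  rw [radicalInverseCount, card_filter,
    sum_range_two_pow_radicalInverse k (fun x => if x < β then 1 else 0), ← card_filter,
    ← card_filter_range_natCast_lt (M := 2 ^ k)
      (by push_cast; exact mul_le_of_le_one_right (by positivity) hβ)]
  simp only [div_lt_iff₀' (pow_pos two_pos k : (0:ℝ) < 2 ^ k)]

lemma radicalInverseCount_two_pow_add {k M : ℕ} (hM : M ≤ 2 ^ k) (β : ℝ) :
    radicalInverseCount (2 ^ k + M) β =
      radicalInverseCount (2 ^ k) β + radicalInverseCount M (β - ((2:ℝ) ^ (k + 1))⁻¹) := by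
  simp only [radicalInverseCount, card_filter, sum_range_add]
  congr 1
  refine sum_congr rfl fun m hm => ?_
  simp only [radicalInverse_two_pow_add ((mem_range.1 hm).trans_le hM), lt_sub_iff_add_lt']

lemma abs_natCeil_sub_max_le (y : ℝ) : |(⌈y⌉₊ : ℝ) - max y 0| ≤ 1 := by
  rcases le_or_gt y 0 with hy | hy
  · simp [Nat.ceil_eq_zero.2 hy, max_eq_right hy]
  · rw [max_eq_left hy.le, abs_le]
    constructor <;> linarith [Nat.le_ceil y, Nat.ceil_lt_add_one hy.le]

/-- `max β 0`, not `β`: the recursion shifts `β` down by `2⁻¹ ^ (k + 1)`, possibly below `0`. -/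
theorem abs_radicalInverseCount_sub_le {k N : ℕ} (hN : N < 2 ^ k) {β : ℝ} (hβ : β ≤ 1) :
    |(radicalInverseCount N β : ℝ) - N * max β 0| ≤ 2 * k := by
  induction k generalizing N β with
  | zero => simp [Nat.lt_one_iff.1 hN, radicalInverseCount]
  | succ k ih =>
    rcases lt_or_ge N (2 ^ k) with hNk | hNk
    · exact (ih hNk hβ).trans (by push_cast; linarith)
    obtain ⟨M, rfl⟩ := Nat.exists_eq_add_of_le hNk
    have hM : M < 2 ^ k := by rw [pow_succ] at hN; omega
    set h : ℝ := ((2:ℝ) ^ (k + 1))⁻¹ with hh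
    have hMh : M * h ≤ 1 := by
      rw [hh, ← div_eq_mul_inv, div_le_one (by positivity)]
      exact_mod_cast hM.le.trans (Nat.pow_le_pow_right two_pos k.le_succ)
    have grid : |(radicalInverseCount (2 ^ k) β : ℝ) - 2 ^ k * max β 0| ≤ 1 := by
      rw [radicalInverseCount_two_pow hβ, mul_max_of_nonneg _ _ (by positivity), mul_zero]
      exact abs_natCeil_sub_max_le _
    have tail := ih hM (β := β - h) (by linarith [show 0 < h by positivity])
    have shift : |(M : ℝ) * max (β - h) 0 - M * max β 0| ≤ 1 := by
      rw [← mul_sub, abs_mul, Nat.abs_cast]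
      calc (M : ℝ) * |max (β - h) 0 - max β 0| ≤ M * |β - h - β| :=
            mul_le_mul_of_nonneg_left (abs_max_sub_max_le_abs _ _ _) M.cast_nonneg
        _ = M * h := by rw [sub_sub_cancel_left, abs_neg, abs_of_pos (by positivity)]
        _ ≤ 1 := hMh
    calc |(radicalInverseCount (2 ^ k + M) β : ℝ) - ↑(2 ^ k + M) * max β 0|
        = |((radicalInverseCount (2 ^ k) β : ℝ) - 2 ^ k * max β 0)
            + ((radicalInverseCount M (β - h) : ℝ) - M * max (β - h) 0)
            + (M * max (β - h) 0 - M * max β 0)| := by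
          rw [radicalInverseCount_two_pow_add hM.le]; push_cast; congr 1; ring
      _ ≤ 1 + 2 * k + 1 := (abs_add_three _ _ _).trans (by gcongr)
      _ = 2 * ↑(k + 1) := by push_cast; ring

lemma card_filter_radicalInverse_mem_Ico_add {α β : ℝ} (hαβ : α ≤ β) (N : ℕ) :
    #{n ∈ range N | radicalInverse n ∈ Set.Ico α β} + radicalInverseCount N α =
      radicalInverseCount N β := by
  simp only [radicalInverseCount, card_filter, ← sum_add_distrib, Set.mem_Ico]
  refine sum_congr rfl fun n _ => ?_
  by_cases hα : radicalInverse n < α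
  · simp [hα, hα.trans_le hαβ]
  · simp [hα, not_lt.1 hα]

theorem abs_card_filter_radicalInverse_mem_Ico_sub_le {α β : ℝ} (hα : 0 ≤ α) (hαβ : α ≤ β)
    (hβ : β ≤ 1) (N : ℕ) :
    |(#{n ∈ range N | radicalInverse n ∈ Set.Ico α β} : ℝ) - N * (β - α)| ≤
      4 * (Nat.log 2 N + 1) := by
  have hN := Nat.lt_pow_succ_log_self one_lt_two N
  have hβN := abs_radicalInverseCount_sub_le hN hβ
  have hαN := abs_radicalInverseCount_sub_le hN (hαβ.trans hβ)
  have hsplit : (#{n ∈ range N | radicalInverse n ∈ Set.Ico α β} : ℝ) =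
      radicalInverseCount N β - radicalInverseCount N α := by
    rw [← card_filter_radicalInverse_mem_Ico_add hαβ]; push_cast; ring
  rw [max_eq_left (hα.trans hαβ)] at hβN
  rw [max_eq_left hα] at hαN
  calc |(#{n ∈ range N | radicalInverse n ∈ Set.Ico α β} : ℝ) - N * (β - α)|
      = |((radicalInverseCount N β : ℝ) - N * β)
          - ((radicalInverseCount N α : ℝ) - N * α)| := by
        rw [hsplit]; ring_nf
    _ ≤ 2 * ↑(Nat.log 2 N + 1) + 2 * ↑(Nat.log 2 N + 1) :=
        (abs_sub _ _).trans (add_le_add hβN hαN)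
    _ = 4 * (Nat.log 2 N + 1) := by push_cast; ring

lemma tendsto_natLog_two_add_one_div :
    Tendsto (fun N : ℕ => ((Nat.log 2 N : ℝ) + 1) / N) atTop (𝓝 0) := by
  have hlog : Tendsto (fun x : ℝ => (Real.logb 2 x + 1) / x) atTop (𝓝 0) :=
    (Real.isLittleO_logb_id_atTop.add
      (Asymptotics.isLittleO_const_id_atTop 1)).tendsto_div_nhds_zero
  refine squeeze_zero (fun N => by positivity) (fun N => ?_)
    (hlog.comp tendsto_natCast_atTop_atTop)
  dsimp only [Function.comp_apply]
  gcongr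
  exact Real.natLog_le_logb N 2

theorem tendsto_card_filter_radicalInverse_mem_Ico {α β : ℝ} (hα : 0 ≤ α) (hαβ : α ≤ β)
    (hβ : β ≤ 1) :
    Tendsto (fun N : ℕ => (#{n ∈ range N | radicalInverse n ∈ Set.Ico α β} : ℝ) / N) atTop
      (𝓝 (β - α)) := by
  rw [← tendsto_sub_nhds_zero_iff]
  refine squeeze_zero_norm' ?_ (by simpa using tendsto_natLog_two_add_one_div.const_mul 4)
  filter_upwards [eventually_gt_atTop 0] with N hN
  have hN' : (0 : ℝ) < N := by exact_mod_cast hN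
  rw [Real.norm_eq_abs, div_sub' hN'.ne', abs_div, abs_of_pos hN', mul_div_assoc']
  exact div_le_div_of_nonneg_right
    (abs_card_filter_radicalInverse_mem_Ico_sub_le hα hαβ hβ N) hN'.le

lemma theta_mem_Ico_iff {a b : ℝ} (n : ℕ) :
    theta n ∈ Set.Ico a b ↔
      radicalInverse n ∈ Set.Ico (a / (2 * Real.pi)) (b / (2 * Real.pi)) := by
  have hπ : 0 < 2 * Real.pi := by positivity
  rw [theta, Set.mem_Ico, Set.mem_Ico, div_le_iff₀' hπ, lt_div_iff₀' hπ]

/-- Equidistribution of the van der Corput sequence: for every arc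
{e^{iφ} : a ≤ φ < b}, the fraction of the first N points lying in it tends
to (b - a)/(2π). -/
theorem vdc_equidistributed (a b : ℝ) (ha : 0 ≤ a) (hab : a ≤ b) (hb : b ≤ 2 * Real.pi) :
    Filter.Tendsto
      (fun N : ℕ =>
        (((Finset.range N).filter (fun n => theta n ∈ Set.Ico a b)).card : ℝ) / N)
      Filter.atTop (nhds ((b - a) / (2 * Real.pi))) := by
  have hπ : 0 < 2 * Real.pi := by positivity
  simp_rw [theta_mem_Ico_iff, sub_div]
  exact tendsto_card_filter_radicalInverse_mem_Ico (by positivity) (by gcongr)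
    ((div_le_one hπ).2 hb)
end

section
/- Let h : ℂ → ℝ be a continuous compactly supported nonnegative function. If h is symmetric under reflection across the real axis and under reflection across each line through the origin at angle α_j, where (α_j) is a sequence of nonzero angles in ℝ/(2πℤ) converging to 0, then h is radial, i.e., h(z) depends only on |z|. -/
/-!
Composing the reflection across the real axis with the reflection across the line at angle `α`
gives the rotation by `2α`, so `h` is invariant under rotation by every `2α_j`. The angles of
rotations fixing `h` form a closed subgroup of `ℝ/2πℤ`. It contains the nonzero angles `2α_j`
accumulating at `0`, so it is not one of the finite cyclic subgroups, hence it is dense and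
therefore everything.
-/

open Filter Topology ComplexConjugate

namespace AddCircle

variable {p : ℝ} [Fact (0 < p)]

theorem dense_addSubgroup_of_zero_mem_closure_diff {s : AddSubgroup (AddCircle p)}
    (hs : (0 : AddCircle p) ∈ closure ((s : Set (AddCircle p)) \ {0})) :
    Dense (s : Set (AddCircle p)) := by
  refine dense_addSubgroup_iff_ne_zmultiples.2 fun a ha hsa => ?_
  have hfin : ((s : Set (AddCircle p)) \ {0}).Finite := by
    subst hsa
    exact (addOrderOf_ne_zero_iff.1 ha).finite_zmultiples.sdiff
  rw [hfin.isClosed.closure_eq] at hs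
  exact hs.2 rfl

end AddCircle

section Rotation

variable {X : Type*}

def rotationInvariantAngles (h : ℂ → X) : AddSubgroup Real.Angle where
  carrier := {θ | ∀ z, h (θ.toCircle * z) = h z}
  zero_mem' := by simp
  add_mem' {a b} ha hb z := by
    rw [Real.Angle.toCircle_add, Circle.coe_mul, mul_assoc, ha, hb]
  neg_mem' {a} ha z := by
    rw [← ha, Real.Angle.toCircle_neg, ← mul_assoc, ← Circle.coe_mul, mul_inv_cancel,
      Circle.coe_one, one_mul]

theorem isClosed_rotationInvariantAngles [TopologicalSpace X] [T2Space X] {h : ℂ → X}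
    (hc : Continuous h) : IsClosed (rotationInvariantAngles h : Set Real.Angle) := by
  have hrot : Continuous fun θ : Real.Angle => (θ.toCircle : ℂ) :=
    continuous_subtype_val.comp AddCircle.homeomorphCircle'.continuous
  simp only [rotationInvariantAngles, AddSubgroup.coe_set_mk, Set.ofPred_forall]
  exact isClosed_iInter fun z =>
    isClosed_eq (hc.comp (hrot.mul continuous_const)) continuous_const

theorem two_nsmul_mem_rotationInvariantAngles {h : ℂ → X} {α : ℝ}
    (hre : ∀ z, h (conj z) = h z)
    (hrefl : ∀ z, h (Complex.exp (2 * α * Complex.I) * conj z) = h z) :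
    (2 : ℕ) • (α : Real.Angle) ∈ rotationInvariantAngles h := by
  intro z
  have hrot := hrefl (conj z)
  rw [Complex.conj_conj, hre] at hrot
  rw [← Real.Angle.coe_nsmul, Real.Angle.toCircle_coe, Circle.coe_exp]
  convert hrot using 4
  push_cast
  ring

theorem apply_eq_of_norm_eq_of_rotationInvariantAngles_eq_top {h : ℂ → X}
    (hS : rotationInvariantAngles h = ⊤) {z w : ℂ} (hzw : ‖z‖ = ‖w‖) : h z = h w := by
  rcases eq_or_ne z 0 with rfl | hz
  · rw [eq_comm, norm_zero, norm_eq_zero] at hzw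
    rw [hzw]
  obtain ⟨θ, hθ⟩ := (Complex.norm_eq_one_iff _).1 (show ‖w / z‖ = 1 by
    rw [norm_div, hzw, div_self (hzw ▸ norm_ne_zero_iff.2 hz)])
  have hrot := (hS ▸ AddSubgroup.mem_top (θ : Real.Angle) : _) z
  rw [Real.Angle.toCircle_coe, Circle.coe_exp, hθ, div_mul_cancel₀ w hz] at hrot
  exact hrot.symm

end Rotation

theorem reflections_force_radial_general (h : ℂ → ℝ)
    (hc : Continuous h)
    (hre : ∀ z : ℂ, h (starRingEnd ℂ z) = h z)
    (α : ℕ → ℝ)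
    (hα0 : ∀ j, ((α j : ℝ) : AddCircle (2 * Real.pi)) ≠ 0)
    (hαlim : Filter.Tendsto (fun j => ((α j : ℝ) : AddCircle (2 * Real.pi)))
      Filter.atTop (nhds 0))
    (hrefl : ∀ j, ∀ z : ℂ,
      h (Complex.exp (2 * (α j : ℂ) * Complex.I) * starRingEnd ℂ z) = h z) :
    ∀ z w : ℂ, ‖z‖ = ‖w‖ → h z = h w := by
  have : Fact (0 < 2 * Real.pi) := ⟨Real.two_pi_pos⟩
  let θ : ℕ → Real.Angle := fun j => α j
  have hθ : Tendsto θ atTop (𝓝 0) := hαlim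
  have h2θ : Tendsto (fun j => (2 : ℕ) • θ j) atTop (𝓝 0) := by
    simpa only [smul_zero] using hθ.const_smul (2 : ℕ)
  -- `2 • θ j` vanishes only for `θ j ∈ {0, π}`, and `θ j` is eventually away from `π`.
  have h2θ_mem : ∀ᶠ j in atTop,
      (2 : ℕ) • θ j ∈ (rotationInvariantAngles h : Set Real.Angle) \ {0} := by
    filter_upwards [hθ.eventually_ne Real.Angle.pi_ne_zero.symm] with j hj
    refine ⟨two_nsmul_mem_rotationInvariantAngles hre (hrefl j), ?_⟩
    simpa [Real.Angle.two_nsmul_eq_zero_iff] using ⟨hα0 j, hj⟩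
  have hdense : Dense (rotationInvariantAngles h : Set Real.Angle) :=
    AddCircle.dense_addSubgroup_of_zero_mem_closure_diff (mem_closure_of_tendsto h2θ h2θ_mem)
  have htop : rotationInvariantAngles h = ⊤ := SetLike.coe_injective <|
    (isClosed_rotationInvariantAngles hc).closure_eq.symm.trans hdense.closure_eq
  exact fun z w => apply_eq_of_norm_eq_of_rotationInvariantAngles_eq_top htop

theorem reflections_force_radial (h : ℂ → ℝ)
    (hc : Continuous h) (hs : HasCompactSupport h) (h0 : ∀ z, 0 ≤ h z)
    (hre : ∀ z : ℂ, h (starRingEnd ℂ z) = h z)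
    (α : ℕ → ℝ)
    (hα0 : ∀ j, ((α j : ℝ) : AddCircle (2 * Real.pi)) ≠ 0)
    (hαlim : Filter.Tendsto (fun j => ((α j : ℝ) : AddCircle (2 * Real.pi)))
      Filter.atTop (nhds 0))
    (hrefl : ∀ j, ∀ z : ℂ,
      h (Complex.exp (2 * (α j : ℂ) * Complex.I) * starRingEnd ℂ z) = h z) :
    ∀ z w : ℂ, ‖z‖ = ‖w‖ → h z = h w :=
  reflections_force_radial_general h hc hre α hα0 hαlim hrefl
end
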